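/- arXiv:1912.11255 — 4 statements merged into one kernel-verified Lean document; each statement's English description precedes it below -/
import Mathlib

section
/- Let K : [0,∞) → ℝ be continuous with K ≤ 0, and let m : [0,∞) → ℝ be a C² solution of m'' + K·m = 0 with m(0)=0, m'(0)=1, m > 0 on (0,∞). If ∫₀^∞ t·(-K(t)) dt < ∞, then the limit lim_{t→∞} m'(t) exists and is finite. -/
/-!
Since `K ≤ 0` and `m ≥ 0`, `m'' = -K m ≥ 0`, so `m'` is nondecreasing from `m'(0) = 1`; hence
`m' ≥ 1` and, `m` being convex with `m(0) = 0`, `m(t) ≤ t m'(t)`. Therefore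
`m'' = -K m ≤ t (-K t) m'`, and the Grönwall estimate
`m'(t) ≤ exp (∫₀^t s (-K s) ds) ≤ exp (∫₀^∞ s (-K s) ds)` bounds the nondecreasing function `m'`,
which therefore converges.
-/

open Set Filter Real MeasureTheory Topology

theorem monotoneOn_Ici_of_hasDerivWithinAt_nonneg {f f' : ℝ → ℝ} {a : ℝ}
    (hf : ∀ t ∈ Ici a, HasDerivWithinAt f (f' t) (Ici a) t) (hf' : ∀ t ∈ Ioi a, 0 ≤ f' t) :
    MonotoneOn f (Ici a) :=
  monotoneOn_of_hasDerivWithinAt_nonneg (convex_Ici a)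
    (fun t ht => (hf t ht).continuousWithinAt)
    (by
      rw [interior_Ici]
      exact fun t ht => (hf t (Ioi_subset_Ici_self ht)).mono Ioi_subset_Ici_self)
    (by rwa [interior_Ici])

theorem MonotoneOn.exists_tendsto_atTop_of_le {f : ℝ → ℝ} {a C : ℝ}
    (hf : MonotoneOn f (Ici a)) (hC : ∀ t ∈ Ici a, f t ≤ C) :
    ∃ L, Tendsto f atTop (𝓝 L) := by
  have hmono : Monotone (fun t => f (max t a)) := fun s t hst =>
    hf (le_max_right s a) (le_max_right t a) (max_le_max_right a hst)
  have hbdd : BddAbove (range fun t => f (max t a)) :=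
    ⟨C, by rintro _ ⟨t, rfl⟩; exact hC _ (le_max_right t a)⟩
  refine ⟨_, (tendsto_atTop_ciSup hmono hbdd).congr' ?_⟩
  filter_upwards [eventually_ge_atTop a] with t ht
  rw [max_eq_left ht]

theorem le_mul_exp_integral_of_hasDerivAt_le_mul {f f' φ : ℝ → ℝ} {a b : ℝ} (hab : a ≤ b)
    (hf : ContinuousOn f (Icc a b)) (hf' : ∀ x ∈ Ioo a b, HasDerivAt f (f' x) x)
    (hpos : ∀ x ∈ Icc a b, 0 < f x) (hφ : IntegrableOn φ (Icc a b))
    (hle : ∀ x ∈ Ioo a b, f' x ≤ φ x * f x) :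
    f b ≤ f a * exp (∫ x in a..b, φ x) := by
  have hlog : log (f b) - log (f a) ≤ ∫ x in a..b, φ x := by
    refine intervalIntegral.sub_le_integral_of_hasDeriv_right_of_le (g' := fun x => f' x / f x) hab
      (hf.log fun x hx => (hpos x hx).ne') (fun x hx => ?_) hφ (fun x hx => ?_)
    · exact ((hf' x hx).log (hpos x (Ioo_subset_Icc_self hx)).ne').hasDerivWithinAt
    · exact (div_le_iff₀ (hpos x (Ioo_subset_Icc_self hx))).2 (hle x hx)
  have ha := hpos a (left_mem_Icc.2 hab)
  have hb := hpos b (right_mem_Icc.2 hab)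
  calc f b = f a * exp (log (f b) - log (f a)) := by
        rw [exp_sub, exp_log ha, exp_log hb]; field_simp
    _ ≤ f a * exp (∫ x in a..b, φ x) := by gcongr

theorem intervalIntegral_le_integral_Ioi {φ : ℝ → ℝ} {a b : ℝ} (hab : a ≤ b)
    (hφ : IntegrableOn φ (Ioi a)) (hφ₀ : ∀ t ∈ Ioi a, 0 ≤ φ t) :
    ∫ t in a..b, φ t ≤ ∫ t in Ioi a, φ t := by
  rw [intervalIntegral.integral_of_le hab]
  exact setIntegral_mono_set hφ ((ae_restrict_mem measurableSet_Ioi).mono hφ₀)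
    Ioc_subset_Ioi_self.eventuallyLE

theorem le_mul_exp_integral_Ioi_of_hasDerivWithinAt_le_mul {f f' φ : ℝ → ℝ} {a : ℝ}
    (hf : ∀ t ∈ Ici a, HasDerivWithinAt f (f' t) (Ici a) t) (hpos : ∀ t ∈ Ici a, 0 < f t)
    (hφ : IntegrableOn φ (Ioi a)) (hφ₀ : ∀ t ∈ Ioi a, 0 ≤ φ t)
    (hle : ∀ t ∈ Ioi a, f' t ≤ φ t * f t) (t : ℝ) (ht : t ∈ Ici a) :
    f t ≤ f a * exp (∫ s in Ioi a, φ s) := by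
  have hgronwall := le_mul_exp_integral_of_hasDerivAt_le_mul (mem_Ici.1 ht)
    (fun s hs => (hf s hs.1).continuousWithinAt.mono Icc_subset_Ici_self)
    (fun s hs => (hf s (Ioi_subset_Ici_self hs.1)).hasDerivAt (Ici_mem_nhds hs.1))
    (fun s hs => hpos s hs.1)
    ((integrableOn_Icc_iff_integrableOn_Ioc).2 (hφ.mono_set Ioc_subset_Ioi_self))
    (fun s hs => hle s hs.1)
  have ha := hpos a self_mem_Ici
  exact hgronwall.trans (by gcongr; exact intervalIntegral_le_integral_Ioi ht hφ hφ₀)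

theorem le_mul_of_map_zero_of_second_deriv_nonneg {f f' f'' : ℝ → ℝ}
    (hf : ∀ t ∈ Ici (0:ℝ), HasDerivWithinAt f (f' t) (Ici 0) t)
    (hf' : ∀ t ∈ Ici (0:ℝ), HasDerivWithinAt f' (f'' t) (Ici 0) t)
    (hf'' : ∀ t ∈ Ioi (0:ℝ), 0 ≤ f'' t) (hf0 : f 0 = 0) (t : ℝ) (ht : t ∈ Ici 0) :
    f t ≤ t * f' t := by
  have := monotoneOn_Ici_of_hasDerivWithinAt_nonneg
    (fun s hs => ((hasDerivWithinAt_id s _).mul (hf' s hs)).sub (hf s hs))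
    (fun s hs => by simpa using mul_nonneg (le_of_lt hs) (hf'' s hs))
    self_mem_Ici ht ht
  simp only [Pi.sub_apply, Pi.mul_apply, id, hf0, zero_mul, sub_zero] at this
  linarith

theorem stmt_1_general (K m m' m'' : ℝ → ℝ)
    (hKle : ∀ t ∈ Ici (0:ℝ), K t ≤ 0)
    (hm : ∀ t ∈ Ici (0:ℝ), HasDerivWithinAt m (m' t) (Ici 0) t)
    (hm' : ∀ t ∈ Ici (0:ℝ), HasDerivWithinAt m' (m'' t) (Ici 0) t)
    (hode : ∀ t ∈ Ici (0:ℝ), m'' t + K t * m t = 0)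
    (hm0 : m 0 = 0) (hm'0 : m' 0 = 1)
    (hmpos : ∀ t > (0:ℝ), 0 < m t)
    (hint : IntegrableOn (fun t => t * (-K t)) (Ioi 0)) :
    ∃ L : ℝ, Tendsto m' atTop (nhds L) := by
  have hnegK : ∀ t ∈ Ioi (0:ℝ), 0 ≤ -K t := fun t ht =>
    neg_nonneg.2 (hKle t (Ioi_subset_Ici_self ht))
  have hm'' : ∀ t ∈ Ioi (0:ℝ), m'' t = -K t * m t := fun t ht => by
    linarith [hode t (Ioi_subset_Ici_self ht)]
  have hm''_nonneg : ∀ t ∈ Ioi (0:ℝ), 0 ≤ m'' t := fun t ht => by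
    rw [hm'' t ht]; exact mul_nonneg (hnegK t ht) (hmpos t ht).le
  have hmono : MonotoneOn m' (Ici 0) := monotoneOn_Ici_of_hasDerivWithinAt_nonneg hm' hm''_nonneg
  have hm'_pos : ∀ t ∈ Ici (0:ℝ), 0 < m' t := fun t ht =>
    one_pos.trans_le (hm'0 ▸ hmono self_mem_Ici ht ht)
  have hm''_le : ∀ t ∈ Ioi (0:ℝ), m'' t ≤ t * -K t * m' t := fun t ht => calc
    m'' t = -K t * m t := hm'' t ht
    _ ≤ -K t * (t * m' t) := by
      gcongr
      · exact hnegK t ht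
      · exact le_mul_of_map_zero_of_second_deriv_nonneg hm hm' hm''_nonneg hm0 t
          (Ioi_subset_Ici_self ht)
    _ = t * -K t * m' t := by ring
  have hbound := le_mul_exp_integral_Ioi_of_hasDerivWithinAt_le_mul hm' hm'_pos hint
    (fun t ht => mul_nonneg (le_of_lt ht) (hnegK t ht)) hm''_le
  rw [hm'0, one_mul] at hbound
  exact hmono.exists_tendsto_atTop_of_le hbound

/-- If moreover `∫₀^∞ t·(-K t) dt < ∞`, then `lim_{t→∞} m'(t)` exists
and is finite. -/
theorem stmt_1 (K m m' m'' : ℝ → ℝ)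
    (hK : ContinuousOn K (Ici 0)) (hKle : ∀ t ∈ Ici (0:ℝ), K t ≤ 0)
    (hm : ∀ t ∈ Ici (0:ℝ), HasDerivWithinAt m (m' t) (Ici 0) t)
    (hm' : ∀ t ∈ Ici (0:ℝ), HasDerivWithinAt m' (m'' t) (Ici 0) t)
    (hm''cont : ContinuousOn m'' (Ici 0))
    (hode : ∀ t ∈ Ici (0:ℝ), m'' t + K t * m t = 0)
    (hm0 : m 0 = 0) (hm'0 : m' 0 = 1)
    (hmpos : ∀ t > (0:ℝ), 0 < m t)
    (hint : IntegrableOn (fun t => t * (-K t)) (Ioi 0)) :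
    ∃ L : ℝ, Tendsto m' atTop (nhds L) :=
  stmt_1_general K m m' m'' hKle hm hm' hode hm0 hm'0 hmpos hint
end

section
/- Let K : [0,∞) → ℝ be continuous with K ≤ 0 and ∫₀^∞ t·(−K(t)) dt < ∞, and let m be the solution of m'' + K·m = 0, m(0)=0, m'(0)=1. Then lim_{t→∞} m'(t) = 1 + ∫₀^∞ (−K(s))·m(s) ds, and this value is ≥ 1. -/
/-!
Since `m'' = (-K) m`, the solution is convex as long as it is nonnegative, and it stays
nonnegative as long as `m' > 0`; a first-zero argument therefore gives `m' ≥ 1` and `m ≥ 0` on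
`[0, ∞)`. Monotonicity of `m'` gives `m s ≤ s m'(s)`, hence `(log m')' = m''/m' ≤ s (-K s)`,
and `m' ≤ exp C` with `C = ∫₀^∞ s (-K s)`. So `(-K) m ≤ exp C · s (-K s)` is integrable, and letting
`t → ∞` in `m'(t) = 1 + ∫₀^t (-K) m` gives the limit, which is `≥ 1` since the integrand is
nonnegative.
-/

open Set Filter Real MeasureTheory

theorem monotoneOn_of_hasDerivWithinAt_nonneg_of_subset {f f' : ℝ → ℝ} {s u : Set ℝ}
    (hs : Convex ℝ s) (hsu : s ⊆ u) (hf : ∀ x ∈ s, HasDerivWithinAt f (f' x) u x)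
    (hf' : ∀ x ∈ interior s, 0 ≤ f' x) : MonotoneOn f s :=
  monotoneOn_of_hasDerivWithinAt_nonneg hs
    (fun x hx => ((hf x hx).continuousWithinAt).mono hsu)
    (fun x hx => ((hf x (interior_subset hx)).hasDerivAt
      (mem_of_superset (isOpen_interior.mem_nhds hx) (interior_subset.trans hsu))).hasDerivWithinAt)
    hf'

theorem intervalIntegral_eq_sub_of_hasDerivWithinAt_Ici {f f' : ℝ → ℝ} {a b : ℝ} (hab : a ≤ b)
    (hf : ∀ x ∈ Ici a, HasDerivWithinAt f (f' x) (Ici a) x) (hf' : ContinuousOn f' (Ici a)) :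
    ∫ x in a..b, f' x = f b - f a :=
  intervalIntegral.integral_eq_sub_of_hasDeriv_right_of_le hab
    (fun x hx => (hf x hx.1).continuousWithinAt.mono Icc_subset_Ici_self)
    (fun x hx => (hf x hx.1.le).mono (Ioi_subset_Ici_self.trans (Ici_subset_Ici.2 hx.1.le)))
    ((hf'.mono (by rw [uIcc_of_le hab]; exact Icc_subset_Ici_self)).intervalIntegrable)

theorem pos_of_forall_pos_on_Ico {g : ℝ → ℝ} {a : ℝ} (hg : ContinuousOn g (Ici a))
    (h : ∀ b ∈ Ici a, (∀ s ∈ Ico a b, 0 < g s) → 0 < g b) : ∀ t ∈ Ici a, 0 < g t := by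
  by_contra! hneg
  set Z := Ici a ∩ g ⁻¹' Iic 0
  have hZ : IsClosed Z := hg.preimage_isClosed_of_isClosed isClosed_Ici isClosed_Iic
  have hZbdd : BddBelow Z := ⟨a, fun x hx => hx.1⟩
  obtain ⟨hinf, hginf⟩ := hZ.csInf_mem hneg hZbdd
  refine (h _ hinf fun s hs => ?_).not_ge hginf
  by_contra! hgs
  exact (csInf_le hZbdd ⟨hs.1, hgs⟩).not_gt hs.2

theorem le_mul_of_hasDerivWithinAt_of_monotoneOn {f f' : ℝ → ℝ}
    (hf : ∀ x ∈ Ici 0, HasDerivWithinAt f (f' x) (Ici 0) x) (hf0 : f 0 = 0)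
    (hmono : MonotoneOn f' (Ici 0)) {s : ℝ} (hs : 0 ≤ s) : f s ≤ s * f' s := by
  have hφ : MonotoneOn (fun x => x * f' s - f x) (Icc 0 s) :=
    monotoneOn_of_hasDerivWithinAt_nonneg_of_subset (convex_Icc 0 s) Icc_subset_Ici_self
      (fun x hx => ((hasDerivWithinAt_id x _).mul_const (f' s)).sub (hf x hx.1))
      (fun x hx => by
        rw [interior_Icc] at hx
        simpa using hmono (mem_Ici.2 hx.1.le) (mem_Ici.2 hs) hx.2.le)
  have := hφ ⟨le_rfl, hs⟩ ⟨hs, le_rfl⟩ hs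
  simp only [zero_mul, hf0, sub_zero] at this
  linarith

theorem log_sub_log_le_integral_of_hasDerivWithinAt_le_mul {g g' φ : ℝ → ℝ} {a t : ℝ}
    (hat : a ≤ t) (hg : ∀ x ∈ Ici a, HasDerivWithinAt g (g' x) (Ici a) x)
    (hg' : ContinuousOn g' (Ici a)) (hpos : ∀ x ∈ Ici a, 0 < g x)
    (hφ : IntervalIntegrable φ volume a t) (hle : ∀ x ∈ Ici a, g' x ≤ φ x * g x) :
    log (g t) - log (g a) ≤ ∫ x in a..t, φ x := by
  have hne : ∀ x ∈ Ici a, g x ≠ 0 := fun x hx => (hpos x hx).ne'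
  have hgc : ContinuousOn g (Ici a) := fun x hx => (hg x hx).continuousWithinAt
  rw [← intervalIntegral_eq_sub_of_hasDerivWithinAt_Ici hat
    (fun x hx => (hg x hx).log (hne x hx)) (hg'.div hgc hne)]
  refine intervalIntegral.integral_mono_on hat
    (((hg'.div hgc hne).mono (by rw [uIcc_of_le hat]; exact Icc_subset_Ici_self)).intervalIntegrable)
    hφ fun x hx => ?_
  rw [div_le_iff₀ (hpos x hx.1)]
  exact hle x hx.1

structure IsJacobiSolution (K m m' m'' : ℝ → ℝ) : Prop where
  hasDerivWithinAt : ∀ t ∈ Ici (0:ℝ), HasDerivWithinAt m (m' t) (Ici 0) t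
  hasDerivWithinAt_deriv : ∀ t ∈ Ici (0:ℝ), HasDerivWithinAt m' (m'' t) (Ici 0) t
  ode : ∀ t ∈ Ici (0:ℝ), m'' t + K t * m t = 0
  zero : m 0 = 0
  deriv_zero : m' 0 = 1

namespace IsJacobiSolution

variable {K m m' m'' : ℝ → ℝ}

theorem continuousOn (h : IsJacobiSolution K m m' m'') : ContinuousOn m (Ici 0) :=
  fun t ht => (h.hasDerivWithinAt t ht).continuousWithinAt

theorem second_deriv_eq (h : IsJacobiSolution K m m' m'') {t : ℝ} (ht : t ∈ Ici 0) :
    m'' t = -K t * m t := by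
  linarith [h.ode t ht]

theorem continuousOn_second_deriv (h : IsJacobiSolution K m m' m'')
    (hK : ContinuousOn K (Ici 0)) : ContinuousOn m'' (Ici 0) :=
  (hK.neg.mul h.continuousOn).congr fun _ ht => h.second_deriv_eq ht

theorem one_le_deriv_of_pos_on_Ico (h : IsJacobiSolution K m m' m'')
    (hKle : ∀ t ∈ Ici (0:ℝ), K t ≤ 0) {b : ℝ} (hb : 0 ≤ b) (hpos : ∀ s ∈ Ico 0 b, 0 < m' s) :
    1 ≤ m' b := by
  have hsub : Icc 0 b ⊆ Ici 0 := Icc_subset_Ici_self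
  have hint : interior (Icc (0:ℝ) b) ⊆ Ico 0 b := by
    rw [interior_Icc]; exact Ioo_subset_Ico_self
  have hm_mono : MonotoneOn m (Icc 0 b) :=
    monotoneOn_of_hasDerivWithinAt_nonneg_of_subset (convex_Icc 0 b) hsub
      (fun x hx => h.hasDerivWithinAt x (hsub hx)) (fun x hx => (hpos x (hint hx)).le)
  have hm'_mono : MonotoneOn m' (Icc 0 b) := by
    refine monotoneOn_of_hasDerivWithinAt_nonneg_of_subset (convex_Icc 0 b) hsub
      (fun x hx => h.hasDerivWithinAt_deriv x (hsub hx)) fun x hx => ?_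
    have hx : x ∈ Icc 0 b := Ico_subset_Icc_self (hint hx)
    have hmx : 0 ≤ m x := h.zero ▸ hm_mono ⟨le_rfl, hb⟩ hx hx.1
    rw [h.second_deriv_eq hx.1]
    exact mul_nonneg (neg_nonneg.2 (hKle x hx.1)) hmx
  exact h.deriv_zero ▸ hm'_mono ⟨le_rfl, hb⟩ ⟨hb, le_rfl⟩ hb

theorem one_le_deriv (h : IsJacobiSolution K m m' m'') (hKle : ∀ t ∈ Ici (0:ℝ), K t ≤ 0) :
    ∀ t ∈ Ici (0:ℝ), 1 ≤ m' t := by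
  have hpos : ∀ t ∈ Ici (0:ℝ), 0 < m' t :=
    pos_of_forall_pos_on_Ico (fun t ht => (h.hasDerivWithinAt_deriv t ht).continuousWithinAt)
      fun b hb hpos => one_pos.trans_le (h.one_le_deriv_of_pos_on_Ico hKle hb hpos)
  exact fun t ht => h.one_le_deriv_of_pos_on_Ico hKle ht fun s hs => hpos s hs.1

theorem nonneg (h : IsJacobiSolution K m m' m'') (hKle : ∀ t ∈ Ici (0:ℝ), K t ≤ 0) :
    ∀ t ∈ Ici (0:ℝ), 0 ≤ m t := by
  have hmono : MonotoneOn m (Ici 0) :=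
    monotoneOn_of_hasDerivWithinAt_nonneg_of_subset (convex_Ici 0) subset_rfl
      h.hasDerivWithinAt fun x hx =>
        zero_le_one.trans (h.one_le_deriv hKle x (interior_subset hx))
  exact fun t ht => h.zero ▸ hmono self_mem_Ici ht ht

theorem monotoneOn_deriv (h : IsJacobiSolution K m m' m'') (hKle : ∀ t ∈ Ici (0:ℝ), K t ≤ 0) :
    MonotoneOn m' (Ici 0) :=
  monotoneOn_of_hasDerivWithinAt_nonneg_of_subset (convex_Ici 0) subset_rfl
    h.hasDerivWithinAt_deriv fun x hx => by
      have hx : x ∈ Ici 0 := interior_subset hx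
      rw [h.second_deriv_eq hx]
      exact mul_nonneg (neg_nonneg.2 (hKle x hx)) (h.nonneg hKle x hx)

theorem deriv_le_exp (h : IsJacobiSolution K m m' m'') (hK : ContinuousOn K (Ici 0))
    (hKle : ∀ t ∈ Ici (0:ℝ), K t ≤ 0) (hint : IntegrableOn (fun t => t * (-K t)) (Ioi 0))
    {t : ℝ} (ht : 0 ≤ t) : m' t ≤ exp (∫ s in Ioi 0, s * (-K s)) := by
  have hpos : ∀ x ∈ Ici (0:ℝ), 0 < m' x := fun x hx => one_pos.trans_le (h.one_le_deriv hKle x hx)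
  have hlog := log_sub_log_le_integral_of_hasDerivWithinAt_le_mul ht h.hasDerivWithinAt_deriv
    (h.continuousOn_second_deriv hK) hpos
    (by rw [intervalIntegrable_iff, uIoc_of_le ht]; exact hint.mono_set Ioc_subset_Ioi_self)
    fun x hx => by
      rw [h.second_deriv_eq hx]
      exact (mul_le_mul_of_nonneg_left
        (le_mul_of_hasDerivWithinAt_of_monotoneOn h.hasDerivWithinAt h.zero
          (h.monotoneOn_deriv hKle) hx) (neg_nonneg.2 (hKle x hx))).trans_eq (by ring)
  have htail : ∫ s in (0:ℝ)..t, s * (-K s) ≤ ∫ s in Ioi 0, s * (-K s) := by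
    rw [intervalIntegral.integral_of_le ht]
    refine setIntegral_mono_set hint ?_ Ioc_subset_Ioi_self.eventuallyLE
    filter_upwards [ae_restrict_mem measurableSet_Ioi] with s hs
    exact mul_nonneg (le_of_lt hs) (neg_nonneg.2 (hKle s (mem_Ici.2 hs.le)))
  rw [h.deriv_zero, log_one, sub_zero] at hlog
  exact (log_le_iff_le_exp (hpos t ht)).1 (hlog.trans htail)

theorem integrableOn (h : IsJacobiSolution K m m' m'') (hK : ContinuousOn K (Ici 0))
    (hKle : ∀ t ∈ Ici (0:ℝ), K t ≤ 0) (hint : IntegrableOn (fun t => t * (-K t)) (Ioi 0)) :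
    IntegrableOn (fun s => (-K s) * m s) (Ioi 0) := by
  refine Integrable.mono' (hint.const_mul (exp (∫ u in Ioi 0, u * (-K u))))
    (((hK.neg.mul h.continuousOn).mono Ioi_subset_Ici_self).aestronglyMeasurable
      measurableSet_Ioi) ?_
  filter_upwards [ae_restrict_mem measurableSet_Ioi] with s hs
  have hs : s ∈ Ici 0 := mem_Ici.2 (le_of_lt hs)
  have hKs : 0 ≤ -K s := neg_nonneg.2 (hKle s hs)
  rw [norm_of_nonneg (mul_nonneg hKs (h.nonneg hKle s hs))]
  calc (-K s) * m s ≤ (-K s) * (s * m' s) :=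
        mul_le_mul_of_nonneg_left
          (le_mul_of_hasDerivWithinAt_of_monotoneOn h.hasDerivWithinAt h.zero
            (h.monotoneOn_deriv hKle) hs) hKs
    _ ≤ (-K s) * (s * exp (∫ u in Ioi 0, u * (-K u))) :=
        mul_le_mul_of_nonneg_left
          (mul_le_mul_of_nonneg_left (h.deriv_le_exp hK hKle hint hs) hs) hKs
    _ = exp (∫ u in Ioi 0, u * (-K u)) * (s * (-K s)) := by ring

theorem deriv_eq_one_add_integral (h : IsJacobiSolution K m m' m'')
    (hK : ContinuousOn K (Ici 0)) {t : ℝ} (ht : 0 ≤ t) :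
    m' t = 1 + ∫ s in (0:ℝ)..t, (-K s) * m s := by
  rw [← intervalIntegral.integral_congr fun s hs => h.second_deriv_eq (uIcc_of_le ht ▸ hs).1,
    intervalIntegral_eq_sub_of_hasDerivWithinAt_Ici ht h.hasDerivWithinAt_deriv
      (h.continuousOn_second_deriv hK), h.deriv_zero]
  ring

end IsJacobiSolution

theorem stmt_11_general (K m m' m'' : ℝ → ℝ)
    (hK : ContinuousOn K (Ici 0)) (hKle : ∀ t ∈ Ici (0:ℝ), K t ≤ 0)
    (hint : IntegrableOn (fun t => t * (-K t)) (Ioi 0))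
    (hm : ∀ t ∈ Ici (0:ℝ), HasDerivWithinAt m (m' t) (Ici 0) t)
    (hm' : ∀ t ∈ Ici (0:ℝ), HasDerivWithinAt m' (m'' t) (Ici 0) t)
    (hode : ∀ t ∈ Ici (0:ℝ), m'' t + K t * m t = 0)
    (hm0 : m 0 = 0) (hm'0 : m' 0 = 1) :
    Tendsto m' atTop (nhds (1 + ∫ s in Ioi 0, (-K s) * m s)) ∧
      1 ≤ 1 + ∫ s in Ioi 0, (-K s) * m s := by
  have h : IsJacobiSolution K m m' m'' := ⟨hm, hm', hode, hm0, hm'0⟩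
  have hlim := intervalIntegral_tendsto_integral_Ioi 0 (h.integrableOn hK hKle hint) tendsto_id
  refine ⟨(hlim.const_add 1).congr' ?_, le_add_of_nonneg_right ?_⟩
  · filter_upwards [eventually_ge_atTop 0] with t ht
    exact (h.deriv_eq_one_add_integral hK ht).symm
  · refine setIntegral_nonneg measurableSet_Ioi fun s hs => ?_
    exact mul_nonneg (neg_nonneg.2 (hKle s (mem_Ici.2 hs.le))) (h.nonneg hKle s (mem_Ici.2 hs.le))

/-- With `K ≤ 0` continuous and `∫₀^∞ t(−K t) dt < ∞`, the solution of
`m'' + K m = 0`, `m 0 = 0`, `m' 0 = 1` satisfies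
`lim m' = 1 + ∫₀^∞ (−K s) m s ds ≥ 1`. -/
theorem stmt_11 (K m m' m'' : ℝ → ℝ)
    (hK : ContinuousOn K (Ici 0)) (hKle : ∀ t ∈ Ici (0:ℝ), K t ≤ 0)
    (hint : IntegrableOn (fun t => t * (-K t)) (Ioi 0))
    (hm : ∀ t ∈ Ici (0:ℝ), HasDerivWithinAt m (m' t) (Ici 0) t)
    (hm' : ∀ t ∈ Ici (0:ℝ), HasDerivWithinAt m' (m'' t) (Ici 0) t)
    (hm''cont : ContinuousOn m'' (Ici 0))
    (hode : ∀ t ∈ Ici (0:ℝ), m'' t + K t * m t = 0)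
    (hm0 : m 0 = 0) (hm'0 : m' 0 = 1) :
    Tendsto m' atTop (nhds (1 + ∫ s in Ioi 0, (-K s) * m s)) ∧
      1 ≤ 1 + ∫ s in Ioi 0, (-K s) * m s :=
  stmt_11_general K m m' m'' hK hKle hint hm hm' hode hm0 hm'0
end

section
/- Let λ ∈ (0, π/2] and n ≥ 2. If a complete noncompact Riemannian manifold M with base point p has the property that the initial vectors of rays representing distinct ends make pairwise angle at least 2λ at p, then the number of ends of M is at most 2·(π/(2λ))^{n-1}. -/
open Set Filter Real InnerProductGeometry Topology

/-- A curve escapes to infinity if it eventually leaves every compact set. -/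
def Escaping {M : Type*} [TopologicalSpace M] (α : ℝ → M) : Prop :=
  Continuous α ∧ Tendsto α atTop (Filter.cocompact M)

/-- Two curves are cofinal if for every compact set `D` they eventually lie in the
same connected component of the complement of `D`. -/
def Cofinal {M : Type*} [TopologicalSpace M] (α β : ℝ → M) : Prop :=
  ∀ D : Set M, IsCompact D → ∃ t₀ : ℝ, ∀ t₁ t₂, t₀ ≤ t₁ → t₀ ≤ t₂ →
    connectedComponentIn Dᶜ (α t₁) = connectedComponentIn Dᶜ (β t₂)

/-- The set of ends of a space: cofinality classes of escaping curves. -/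
def Ends (M : Type*) [TopologicalSpace M] : Type _ :=
  Quot (fun α β : {γ : ℝ → M // Escaping γ} => Cofinal α.1 β.1)

/-!
Put around each `v i` the cone of half-angle `λ` inside the unit ball. By the triangle inequality
for angles these cones are pairwise disjoint, so their number times their common volume is at
most the volume of the ball, which is twice that of the cone of half-angle `π / 2`. Slicing
perpendicular to the axis, the cone of half-angle `λ` has volume proportional to
`∫ x in 0..λ, sin x ^ (n - 2)`, and the concavity estimate `c * sin x ≤ sin (c * x)` with
`c = 2λ / π` bounds this below by `c ^ (n - 1)` times its value at `λ = π / 2`.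
-/

open MeasureTheory Module Function
open scoped RealInnerProductSpace ENNReal

theorem mul_sin_le_sin_mul {c x : ℝ} (hc0 : 0 ≤ c) (hc1 : c ≤ 1) (hx0 : 0 ≤ x) (hx : x ≤ π) :
    c * sin x ≤ sin (c * x) := by
  simpa using strictConcaveOn_sin_Icc.concaveOn.2 ⟨hx0, hx⟩ ⟨le_rfl, pi_pos.le⟩ hc0
    (sub_nonneg.2 hc1) (add_sub_cancel c 1)

theorem pow_mul_integral_sin_pow_le (j : ℕ) {a b : ℝ} (ha : 0 < a) (hab : a ≤ b) (hb : b ≤ π) :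
    (a / b) ^ (j + 1) * ∫ x in 0..b, sin x ^ j ≤ ∫ x in 0..a, sin x ^ j := by
  set c := a / b
  have hb0 : 0 < b := ha.trans_le hab
  have hc0 : 0 < c := div_pos ha hb0
  have hc1 : c ≤ 1 := div_le_one_of_le₀ hab hb0.le
  have hsub : ∫ x in 0..a, sin x ^ j = c * ∫ x in 0..b, sin (c * x) ^ j := by
    rw [intervalIntegral.integral_comp_mul_left (fun x => sin x ^ j) hc0.ne', mul_zero,
      div_mul_cancel₀ a hb0.ne', smul_eq_mul, mul_inv_cancel_left₀ hc0.ne']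
  calc c ^ (j + 1) * ∫ x in 0..b, sin x ^ j = c * ∫ x in 0..b, (c * sin x) ^ j := by
        simp_rw [mul_pow]; rw [intervalIntegral.integral_const_mul]; ring
    _ ≤ c * ∫ x in 0..b, sin (c * x) ^ j := by
        gcongr
        refine intervalIntegral.integral_mono_on hb0.le
          (Continuous.intervalIntegrable (by fun_prop) _ _)
          (Continuous.intervalIntegrable (by fun_prop) _ _) fun x hx => ?_
        have hsin : 0 ≤ sin x := sin_nonneg_of_nonneg_of_le_pi hx.1 (hx.2.trans hb)
        gcongr
        exact mul_sin_le_sin_mul hc0.le hc1 hx.1 (hx.2.trans hb)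
    _ = _ := hsub.symm

theorem integral_sqrt_one_sub_sq_pow (k : ℕ) {a : ℝ} (ha0 : 0 ≤ a) (ha : a ≤ π) :
    ∫ t in cos a..1, √(1 - t ^ 2) ^ k = ∫ x in 0..a, sin x ^ (k + 1) := by
  have hsub := intervalIntegral.integral_comp_mul_deriv (a := 0) (b := a) (f := cos)
    (f' := fun x => -sin x) (g := fun t => √(1 - t ^ 2) ^ k) (fun x _ => hasDerivAt_cos x)
    (by fun_prop) (by fun_prop)
  rw [cos_zero] at hsub
  rw [intervalIntegral.integral_symm, ← hsub, ← intervalIntegral.integral_neg]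
  refine intervalIntegral.integral_congr fun x hx => ?_
  rw [uIcc_of_le ha0] at hx
  have hsin : 0 ≤ sin x := sin_nonneg_of_nonneg_of_le_pi hx.1 (hx.2.trans ha)
  simp only [Function.comp, ← sin_sq, sqrt_sq hsin]
  ring

theorem integral_sin_pow_add_two_add_sin_pow_mul_cos (m : ℕ) (b : ℝ) :
    (∫ x in 0..b, sin x ^ (m + 2)) + sin b ^ (m + 1) * cos b / (m + 2)
      = (m + 1) / (m + 2) * ∫ x in 0..b, sin x ^ m := by
  rw [integral_sin_pow, sin_zero, zero_pow m.succ_ne_zero]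
  ring

theorem mul_tan_le_sqrt_one_sub_sq {θ t : ℝ} (h0 : 0 ≤ θ) (h1 : θ < π / 2) (ht0 : 0 ≤ t)
    (ht : t ≤ cos θ) : t * tan θ ≤ √(1 - t ^ 2) := by
  have hcos : 0 < cos θ := cos_pos_of_mem_Ioo ⟨by linarith [pi_pos], h1⟩
  have htan : 0 ≤ tan θ := tan_nonneg_of_nonneg_of_le_pi_div_two h0 h1.le
  calc t * tan θ ≤ cos θ * tan θ := by gcongr
    _ = √(1 - cos θ ^ 2) := by
      rw [tan_eq_sin_div_cos, mul_div_cancel₀ _ hcos.ne', ← sin_sq,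
        sqrt_sq (sin_nonneg_of_nonneg_of_le_pi h0 (by linarith [pi_pos]))]
    _ ≤ √(1 - t ^ 2) := by gcongr

theorem sqrt_one_sub_sq_le_mul_tan {θ t : ℝ} (h0 : 0 ≤ θ) (h1 : θ < π / 2) (ht : cos θ ≤ t) :
    √(1 - t ^ 2) ≤ t * tan θ := by
  have hcos : 0 < cos θ := cos_pos_of_mem_Ioo ⟨by linarith [pi_pos], h1⟩
  have htan : 0 ≤ tan θ := tan_nonneg_of_nonneg_of_le_pi_div_two h0 h1.le
  calc √(1 - t ^ 2) ≤ √(1 - cos θ ^ 2) := by gcongr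
    _ = cos θ * tan θ := by
      rw [tan_eq_sin_div_cos, mul_div_cancel₀ _ hcos.ne', ← sin_sq,
        sqrt_sq (sin_nonneg_of_nonneg_of_le_pi h0 (by linarith [pi_pos]))]
    _ ≤ t * tan θ := by gcongr

theorem integral_min_sqrt_one_sub_sq_mul_tan_pow (m : ℕ) {θ : ℝ} (h0 : 0 < θ) (h1 : θ < π / 2) :
    ∫ t in 0..1, (min √(1 - t ^ 2) (t * tan θ)) ^ (m + 1)
      = (m + 1) / (m + 2) * ∫ x in 0..θ, sin x ^ m := by
  have hcos : 0 < cos θ := cos_pos_of_mem_Ioo ⟨by linarith [pi_pos], h1⟩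
  have hcone : ∫ t in 0..cos θ, (min √(1 - t ^ 2) (t * tan θ)) ^ (m + 1)
      = sin θ ^ (m + 1) * cos θ / (m + 2) := by
    have hpiece : EqOn (fun t => (min √(1 - t ^ 2) (t * tan θ)) ^ (m + 1))
        (fun t => tan θ ^ (m + 1) * t ^ (m + 1)) (uIcc 0 (cos θ)) := fun t ht => by
      rw [uIcc_of_le hcos.le] at ht
      simp only [min_eq_right (mul_tan_le_sqrt_one_sub_sq h0.le h1 ht.1 ht.2), mul_pow, mul_comm]
    rw [intervalIntegral.integral_congr hpiece, intervalIntegral.integral_const_mul, integral_pow,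
      tan_eq_sin_div_cos, div_pow, pow_succ (cos θ) (m + 1)]
    field_simp
    push_cast
    ring
  have hcap : ∫ t in cos θ..1, (min √(1 - t ^ 2) (t * tan θ)) ^ (m + 1)
      = ∫ x in 0..θ, sin x ^ (m + 2) := by
    rw [← integral_sqrt_one_sub_sq_pow (m + 1) h0.le (by linarith [pi_pos])]
    refine intervalIntegral.integral_congr fun t ht => ?_
    rw [uIcc_of_le (cos_le_one θ)] at ht
    simp only [min_eq_left (sqrt_one_sub_sq_le_mul_tan h0.le h1 ht.1)]
  rw [← intervalIntegral.integral_add_adjacent_intervals (b := cos θ)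
    (Continuous.intervalIntegrable (by fun_prop) _ _)
    (Continuous.intervalIntegrable (by fun_prop) _ _), hcone, hcap, add_comm,
    integral_sin_pow_add_two_add_sin_pow_mul_cos]

theorem integral_sqrt_one_sub_sq_pow_succ (m : ℕ) :
    ∫ t in 0..1, √(1 - t ^ 2) ^ (m + 1) = (m + 1) / (m + 2) * ∫ x in 0..π / 2, sin x ^ m := by
  have h := integral_sqrt_one_sub_sq_pow (m + 1) (a := π / 2) (by positivity) (by linarith [pi_pos])
  rw [cos_pi_div_two] at h
  rw [h, ← integral_sin_pow_add_two_add_sin_pow_mul_cos, cos_pi_div_two, mul_zero, zero_div,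
    add_zero]

theorem pow_mul_integral_sqrt_one_sub_sq_pow_le (k : ℕ) {θ : ℝ} (h0 : 0 < θ) (h1 : θ < π / 2) :
    (2 * θ / π) ^ k * ∫ t in 0..1, √(1 - t ^ 2) ^ k
      ≤ ∫ t in 0..1, (min √(1 - t ^ 2) (t * tan θ)) ^ k := by
  cases k with
  | zero => simp
  | succ m =>
    rw [integral_sqrt_one_sub_sq_pow_succ, integral_min_sqrt_one_sub_sq_mul_tan_pow m h0 h1,
      mul_left_comm, show 2 * θ / π = θ / (π / 2) by field_simp]
    gcongr
    exact pow_mul_integral_sin_pow_le m h0 h1.le (by linarith [pi_pos])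

theorem lt_one_and_mul_cos_lt_iff {r s t θ : ℝ} (hr : 0 ≤ r) (hs : 0 ≤ s)
    (hrst : r ^ 2 = t ^ 2 + s ^ 2) (h0 : 0 ≤ θ) (h1 : θ ≤ π / 2) :
    r < 1 ∧ r * cos θ < t ↔ (t ∈ Ioo 0 1 ∧ s < √(1 - t ^ 2)) ∧ s * cos θ < t * sin θ := by
  have hc : 0 ≤ cos θ := cos_nonneg_of_mem_Icc ⟨by linarith [pi_pos], h1⟩
  have hσ : 0 ≤ sin θ := sin_nonneg_of_nonneg_of_le_pi h0 (by linarith [pi_pos])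
  have hcs := cos_sq_add_sin_sq θ
  constructor
  · rintro ⟨hr1, hrt⟩
    have ht0 : 0 < t := (mul_nonneg hr hc).trans_lt hrt
    have hrt2 : (r * cos θ) ^ 2 < t ^ 2 := pow_lt_pow_left₀ hrt (by positivity) two_ne_zero
    refine ⟨⟨⟨ht0, by nlinarith⟩, (lt_sqrt hs).2 (by nlinarith)⟩, ?_⟩
    exact lt_of_pow_lt_pow_left₀ 2 (by positivity) (by nlinarith)
  · rintro ⟨⟨⟨ht0, -⟩, hs1⟩, hst⟩
    have hs1' := (lt_sqrt hs).1 hs1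
    have hst2 : (s * cos θ) ^ 2 < (t * sin θ) ^ 2 :=
      pow_lt_pow_left₀ hst (by positivity) two_ne_zero
    exact ⟨lt_of_pow_lt_pow_left₀ 2 zero_le_one (by nlinarith),
      lt_of_pow_lt_pow_left₀ 2 ht0.le (by nlinarith)⟩

theorem card_mul_le_measure_of_pairwise_disjoint {α ι : Type*} [MeasurableSpace α]
    {μ : Measure α} {K : ι → Set α} {S : Set α} {a : ℝ≥0∞} (hK : ∀ i, MeasurableSet (K i))
    (hdisj : Pairwise (Disjoint on K)) (hS : ∀ i, K i ⊆ S) (ha : ∀ i, a ≤ μ (K i)) :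
    ENat.card ι * a ≤ μ S :=
  calc ENat.card ι * a = ∑' _ : ι, a := (ENNReal.tsum_const a).symm
    _ ≤ ∑' i, μ (K i) := ENNReal.tsum_le_tsum ha
    _ ≤ μ (⋃ i, K i) := tsum_meas_le_meas_iUnion_of_disjoint μ hK hdisj
    _ ≤ μ S := measure_mono (iUnion_subset hS)

theorem finite_and_natCard_mul_le_of_enatCard_mul_le {ι : Type*} {c C : ℝ} (hc : 0 < c)
    (hC : 0 ≤ C) (h : (ENat.card ι : ℝ≥0∞) * ENNReal.ofReal c ≤ ENNReal.ofReal C) :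
    Finite ι ∧ Nat.card ι * c ≤ C := by
  have hfin : Finite ι := by
    by_contra hinf
    rw [not_finite_iff_infinite, ← ENat.card_eq_top] at hinf
    rw [hinf, ENat.toENNReal_top, ENNReal.top_mul (ENNReal.ofReal_pos.2 hc).ne', top_le_iff] at h
    exact ENNReal.ofReal_ne_top h
  refine ⟨hfin, ?_⟩
  rwa [ENat.card_eq_coe_natCard, ENat.toENNReal_coe, ← ENNReal.ofReal_natCast,
    ← ENNReal.ofReal_mul (Nat.cast_nonneg _), ENNReal.ofReal_le_ofReal_iff hC] at h

theorem isOpen_setOf_mem_Ioo_and_norm_lt {F : Type*} [NormedAddCommGroup F] {ρ : ℝ → ℝ}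
    {a b : ℝ} (hρ : Continuous ρ) : IsOpen {p : ℝ × F | p.1 ∈ Ioo a b ∧ ‖p.2‖ < ρ p.1} :=
  (isOpen_Ioo.preimage continuous_fst).inter
    (isOpen_lt (continuous_norm.comp continuous_snd) (hρ.comp continuous_fst))

theorem prod_setOf_mem_Ioo_and_norm_lt {F : Type*} [NormedAddCommGroup F] [NormedSpace ℝ F]
    [MeasurableSpace F] [BorelSpace F] [FiniteDimensional ℝ F] (μ : Measure F)
    [μ.IsAddHaarMeasure] {ρ : ℝ → ℝ} {a b : ℝ} (hab : a ≤ b) (hρ : Continuous ρ)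
    (hpos : ∀ t ∈ Ioo a b, 0 < ρ t) :
    (volume.prod μ) {p : ℝ × F | p.1 ∈ Ioo a b ∧ ‖p.2‖ < ρ p.1}
      = ENNReal.ofReal (∫ t in a..b, ρ t ^ finrank ℝ F) * μ (Metric.ball 0 1) := by
  have hslice (t : ℝ) : μ (Prod.mk t ⁻¹' {p : ℝ × F | p.1 ∈ Ioo a b ∧ ‖p.2‖ < ρ p.1})
      = (Ioo a b).indicator
          (fun t => ENNReal.ofReal (ρ t ^ finrank ℝ F) * μ (Metric.ball 0 1)) t := by
    by_cases ht : t ∈ Ioo a b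
    · have : Prod.mk t ⁻¹' {p : ℝ × F | p.1 ∈ Ioo a b ∧ ‖p.2‖ < ρ p.1}
          = Metric.ball 0 (ρ t) := by
        ext y; simp only [mem_preimage, mem_ofPred_eq, ht, true_and, mem_ball_zero_iff]
      rw [this, indicator_of_mem ht, Measure.addHaar_ball_of_pos _ _ (hpos t ht)]
    · have : Prod.mk t ⁻¹' {p : ℝ × F | p.1 ∈ Ioo a b ∧ ‖p.2‖ < ρ p.1} = ∅ := by
        ext y; simp only [mem_preimage, mem_ofPred_eq, ht, false_and, mem_empty_iff_false]
      rw [this, measure_empty, indicator_of_notMem ht]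
  have hint : IntegrableOn (fun t => ρ t ^ finrank ℝ F) (Ioo a b) :=
    (hρ.pow _).integrableOn_Icc.mono_set Ioo_subset_Icc_self
  have hnonneg : 0 ≤ᵐ[volume.restrict (Ioo a b)] fun t => ρ t ^ finrank ℝ F :=
    (ae_restrict_iff' measurableSet_Ioo).2 (.of_forall fun t ht => pow_nonneg (hpos t ht).le _)
  rw [Measure.prod_apply (isOpen_setOf_mem_Ioo_and_norm_lt hρ).measurableSet,
    lintegral_congr hslice, lintegral_indicator measurableSet_Ioo,
    lintegral_mul_const _ (by fun_prop),
    ← ofReal_integral_eq_lintegral_ofReal hint hnonneg,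
    intervalIntegral.integral_of_le hab, integral_Ioc_eq_integral_Ioo]

section SphericalSector

variable {E : Type*} [NormedAddCommGroup E] [InnerProductSpace ℝ E] {v : E} {θ : ℝ}

/-- The cone over the spherical cap of angular radius `θ` about `v`, cut off by the unit ball. -/
def sphericalSector (v : E) (θ : ℝ) : Set E := {x | ‖x‖ < 1 ∧ ‖x‖ * cos θ < ⟪x, v⟫}

theorem sphericalSector_subset_ball (v : E) (θ : ℝ) : sphericalSector v θ ⊆ Metric.ball 0 1 :=
  fun _ hx => mem_ball_zero_iff.2 hx.1

theorem isOpen_sphericalSector (v : E) (θ : ℝ) : IsOpen (sphericalSector v θ) :=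
  (isOpen_lt continuous_norm continuous_const).inter
    (isOpen_lt (continuous_norm.mul continuous_const) (continuous_id.inner continuous_const))

theorem angle_lt_of_mem_sphericalSector {x : E} (hv : ‖v‖ = 1) (hθ : 0 ≤ θ)
    (hx : x ∈ sphericalSector v θ) : angle x v < θ := by
  have hx0 : x ≠ 0 := by rintro rfl; simp [sphericalSector] at hx
  by_contra! h
  have := cos_le_cos_of_nonneg_of_le_pi hθ (angle_le_pi x v) h
  rw [cos_angle, hv, mul_one, div_le_iff₀ (norm_pos_iff.2 hx0)] at this
  exact this.not_gt (by linarith [hx.2])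

theorem disjoint_sphericalSector {w : E} (hv : ‖v‖ = 1) (hw : ‖w‖ = 1) (hθ : 0 ≤ θ)
    (h : 2 * θ ≤ angle v w) : Disjoint (sphericalSector v θ) (sphericalSector w θ) := by
  refine Set.disjoint_left.2 fun x hxv hxw => ?_
  have := angle_le_angle_add_angle v x w
  rw [angle_comm v x] at this
  linarith [angle_lt_of_mem_sphericalSector hv hθ hxv, angle_lt_of_mem_sphericalSector hw hθ hxw]

noncomputable def axialSplit (v : E) (hv : ‖v‖ = 1) : E ≃ₗᵢ[ℝ] WithLp 2 (ℝ × (ℝ ∙ v)ᗮ) :=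
  (ℝ ∙ v).orthogonalDecomposition.trans <| LinearIsometryEquiv.withLpProdCongr 2
    (LinearIsometryEquiv.toSpanUnitSingleton v hv).symm (LinearIsometryEquiv.refl ℝ _)

theorem axialSplit_fst (hv : ‖v‖ = 1) (x : E) : (axialSplit v hv x).fst = ⟪v, x⟫ := by
  apply (LinearIsometryEquiv.toSpanUnitSingleton v hv).injective
  ext
  simp [axialSplit, Submodule.starProjection_unit_singleton ℝ hv]

theorem norm_sq_eq_inner_sq_add_norm_axialSplit_snd_sq (hv : ‖v‖ = 1) (x : E) :
    ‖x‖ ^ 2 = ⟪v, x⟫ ^ 2 + ‖(axialSplit v hv x).snd‖ ^ 2 := by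
  rw [← (axialSplit v hv).norm_map, WithLp.prod_norm_sq_eq_of_L2, axialSplit_fst, norm_eq_abs,
    sq_abs]

theorem sphericalSector_eq_preimage_axialSplit (hv : ‖v‖ = 1) (h0 : 0 ≤ θ) (h1 : θ ≤ π / 2) :
    sphericalSector v θ = (fun x => (axialSplit v hv x).ofLp) ⁻¹'
      {p | (p.1 ∈ Ioo 0 1 ∧ ‖p.2‖ < √(1 - p.1 ^ 2)) ∧ ‖p.2‖ * cos θ < p.1 * sin θ} := by
  ext x
  rw [sphericalSector, mem_ofPred_eq, real_inner_comm, ← axialSplit_fst hv]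
  exact lt_one_and_mul_cos_lt_iff (norm_nonneg _) (norm_nonneg _)
    (by rw [norm_sq_eq_inner_sq_add_norm_axialSplit_snd_sq hv, axialSplit_fst]; rfl) h0 h1

variable [FiniteDimensional ℝ E] [MeasurableSpace E] [BorelSpace E]

theorem volume_sphericalSector_pi_div_two (hv : v ≠ 0) :
    volume (sphericalSector v (π / 2)) = volume (Metric.ball (0 : E) 1) / 2 := by
  set S := sphericalSector v (π / 2)
  have hS : S = {x | ‖x‖ < 1 ∧ 0 < ⟪x, v⟫} := by simp [S, sphericalSector, cos_pi_div_two]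
  have hnegS : -S = {x | ‖x‖ < 1 ∧ ⟪x, v⟫ < 0} := by
    ext x; simp [hS, inner_neg_left]
  have hdisj : Disjoint S (-S) := by
    rw [hnegS, hS, Set.disjoint_left]
    exact fun x hx hx' => hx.2.not_gt hx'.2
  have hnull : volume ((ℝ ∙ v)ᗮ : Set E) = 0 := by
    refine Measure.addHaar_submodule _ _ fun htop => ?_
    have : v ∈ (ℝ ∙ v)ᗮ := htop ▸ Submodule.mem_top
    exact hv (inner_self_eq_zero.1 (Submodule.mem_orthogonal_singleton_iff_inner_right.1 this))
  have hcover : Metric.ball (0 : E) 1 ⊆ (S ∪ -S) ∪ (ℝ ∙ v)ᗮ := by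
    intro x hx
    rw [mem_ball_zero_iff] at hx
    rcases lt_trichotomy ⟪x, v⟫ 0 with h | h | h
    · exact Or.inl (Or.inr (hnegS ▸ ⟨hx, h⟩))
    · exact Or.inr (Submodule.mem_orthogonal_singleton_iff_inner_right.2
        (real_inner_comm x v ▸ h))
    · exact Or.inl (Or.inl (hS ▸ ⟨hx, h⟩))
  have hunion : volume (S ∪ -S) = 2 * volume S := by
    rw [measure_union hdisj (isOpen_sphericalSector v _).neg.measurableSet, Measure.measure_neg,
      two_mul]
  have hball : volume (Metric.ball (0 : E) 1) = 2 * volume S := by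
    refine le_antisymm ?_ ?_
    · calc volume (Metric.ball (0 : E) 1)
          ≤ volume ((S ∪ -S) ∪ (ℝ ∙ v)ᗮ) := measure_mono hcover
        _ ≤ volume (S ∪ -S) := (measure_union_le _ _).trans (by rw [hnull, add_zero])
        _ = 2 * volume S := hunion
    · refine hunion ▸ measure_mono (union_subset (sphericalSector_subset_ball v _) ?_)
      intro x hx
      simpa using sphericalSector_subset_ball v _ hx
  rw [hball, ENNReal.eq_div_iff two_ne_zero ENNReal.ofNat_ne_top]

theorem measurePreserving_axialSplit (hv : ‖v‖ = 1) :
    MeasurePreserving (fun x => (axialSplit v hv x).ofLp) :=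
  (WithLp.volume_preserving_ofLp ℝ _).comp (axialSplit v hv).measurePreserving

theorem volume_sphericalSector_eq_integral (hv : ‖v‖ = 1) (h0 : 0 < θ) (h1 : θ < π / 2) :
    volume (sphericalSector v θ)
      = ENNReal.ofReal (∫ t in 0..1, (min √(1 - t ^ 2) (t * tan θ)) ^ finrank ℝ (ℝ ∙ v)ᗮ)
        * volume (Metric.ball (0 : (ℝ ∙ v)ᗮ) 1) := by
  have hcos : 0 < cos θ := cos_pos_of_mem_Ioo ⟨by linarith [pi_pos], h1⟩
  have hρ : Continuous fun t : ℝ => min √(1 - t ^ 2) (t * tan θ) := by fun_prop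
  have hset : {p : ℝ × (ℝ ∙ v)ᗮ | (p.1 ∈ Ioo 0 1 ∧ ‖p.2‖ < √(1 - p.1 ^ 2))
      ∧ ‖p.2‖ * cos θ < p.1 * sin θ}
        = {p | p.1 ∈ Ioo 0 1 ∧ ‖p.2‖ < min √(1 - p.1 ^ 2) (p.1 * tan θ)} := by
    ext p
    simp only [mem_ofPred_eq, lt_min_iff, tan_eq_sin_div_cos, ← mul_div_assoc, lt_div_iff₀ hcos,
      and_assoc]
  rw [sphericalSector_eq_preimage_axialSplit hv h0.le h1.le, hset,
    (measurePreserving_axialSplit hv).measure_preimage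
      (isOpen_setOf_mem_Ioo_and_norm_lt hρ).measurableSet.nullMeasurableSet]
  refine prod_setOf_mem_Ioo_and_norm_lt volume zero_le_one hρ fun t ht => ?_
  exact lt_min (sqrt_pos.2 (by nlinarith [ht.1, ht.2]))
    (mul_pos ht.1 (tan_pos_of_pos_of_lt_pi_div_two h0 h1))

theorem volume_sphericalSector_pi_div_two_eq_integral (hv : ‖v‖ = 1) :
    volume (sphericalSector v (π / 2))
      = ENNReal.ofReal (∫ t in 0..1, √(1 - t ^ 2) ^ finrank ℝ (ℝ ∙ v)ᗮ)
        * volume (Metric.ball (0 : (ℝ ∙ v)ᗮ) 1) := by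
  have hρ : Continuous fun t : ℝ => √(1 - t ^ 2) := by fun_prop
  have hset : {p : ℝ × (ℝ ∙ v)ᗮ | (p.1 ∈ Ioo 0 1 ∧ ‖p.2‖ < √(1 - p.1 ^ 2))
      ∧ ‖p.2‖ * cos (π / 2) < p.1 * sin (π / 2)}
        = {p | p.1 ∈ Ioo 0 1 ∧ ‖p.2‖ < √(1 - p.1 ^ 2)} := by
    ext p
    simp only [mem_ofPred_eq, cos_pi_div_two, sin_pi_div_two, mul_zero, mul_one]
    exact and_iff_left_of_imp fun h => h.1.1
  rw [sphericalSector_eq_preimage_axialSplit hv (by positivity) le_rfl, hset,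
    (measurePreserving_axialSplit hv).measure_preimage
      (isOpen_setOf_mem_Ioo_and_norm_lt hρ).measurableSet.nullMeasurableSet]
  exact prod_setOf_mem_Ioo_and_norm_lt volume zero_le_one hρ fun t ht =>
    sqrt_pos.2 (by nlinarith [ht.1, ht.2])

theorem ofReal_pow_mul_volume_sphericalSector_le (hv : ‖v‖ = 1) (h0 : 0 < θ) (h1 : θ ≤ π / 2) :
    ENNReal.ofReal ((2 * θ / π) ^ (finrank ℝ E - 1)) * volume (sphericalSector v (π / 2))
      ≤ volume (sphericalSector v θ) := by
  -- `tan (π / 2) = 0` in Mathlib, so the slices need `θ < π / 2`; at `θ = π / 2` the factor is 1.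
  rcases h1.lt_or_eq with h1 | rfl
  · have hdim : finrank ℝ (ℝ ∙ v)ᗮ = finrank ℝ E - 1 := by
      have := (ℝ ∙ v).finrank_add_finrank_orthogonal
      rw [finrank_span_singleton (by rintro rfl; simp at hv)] at this
      omega
    rw [volume_sphericalSector_eq_integral hv h0 h1,
      volume_sphericalSector_pi_div_two_eq_integral hv, ← mul_assoc,
      ← ENNReal.ofReal_mul (by positivity), hdim]
    gcongr
    exact pow_mul_integral_sqrt_one_sub_sq_pow_le _ h0 h1
  · rw [show 2 * (π / 2) / π = 1 by field_simp, one_pow, ENNReal.ofReal_one, one_mul]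

theorem finite_and_natCard_le_of_le_angle {ι : Type*} (h0 : 0 < θ) (h1 : θ ≤ π / 2)
    (v : ι → E) (hv : ∀ i, ‖v i‖ = 1) (hangle : ∀ i j, i ≠ j → 2 * θ ≤ angle (v i) (v j)) :
    Finite ι ∧ (Nat.card ι : ℝ) ≤ 2 * (π / (2 * θ)) ^ (finrank ℝ E - 1) := by
  set c := (2 * θ / π) ^ (finrank ℝ E - 1)
  have hc : 0 < c := by positivity
  set H := volume (Metric.ball (0 : E) 1) / 2
  have hH0 : H ≠ 0 :=
    ENNReal.div_ne_zero.2 ⟨(Metric.measure_ball_pos _ _ one_pos).ne', ENNReal.ofNat_ne_top⟩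
  have hHtop : H ≠ ⊤ := ENNReal.div_ne_top measure_ball_lt_top.ne two_ne_zero
  have hcount : (ENat.card ι : ℝ≥0∞) * ENNReal.ofReal c * H ≤ 2 * H := by
    rw [mul_assoc, ENNReal.mul_div_cancel two_ne_zero ENNReal.ofNat_ne_top]
    refine card_mul_le_measure_of_pairwise_disjoint
      (fun i => (isOpen_sphericalSector _ _).measurableSet)
      (fun i j hij => disjoint_sphericalSector (hv i) (hv j) h0.le (hangle i j hij))
      (fun i => sphericalSector_subset_ball _ _) fun i => ?_
    calc ENNReal.ofReal c * H = ENNReal.ofReal c * volume (sphericalSector (v i) (π / 2)) := by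
          rw [volume_sphericalSector_pi_div_two (by rintro h; simpa [h] using hv i)]
      _ ≤ volume (sphericalSector (v i) θ) :=
          ofReal_pow_mul_volume_sphericalSector_le (hv i) h0 h1
  rw [← ENNReal.ofReal_ofNat 2] at hcount
  obtain ⟨hfin, hbound⟩ := finite_and_natCard_mul_le_of_enatCard_mul_le hc zero_le_two
    ((ENNReal.mul_le_mul_iff_left hH0 hHtop).1 hcount)
  refine ⟨hfin, ?_⟩
  rwa [← le_div_iff₀ hc, div_eq_mul_inv, ← inv_pow, inv_div] at hbound

end SphericalSector

theorem stmt_12_general (n : ℕ) (lam : ℝ) (hlam0 : 0 < lam) (hlam : lam ≤ π / 2)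
    (M : Type*) [MetricSpace M]
    (v : Ends M → EuclideanSpace ℝ (Fin n))
    (hunit : ∀ e, ‖v e‖ = 1)
    (hangle : ∀ e e', e ≠ e' → 2 * lam ≤ angle (v e) (v e')) :
    Finite (Ends M) ∧ (Nat.card (Ends M) : ℝ) ≤ 2 * (π / (2 * lam)) ^ (n - 1) := by
  simpa using finite_and_natCard_le_of_le_angle hlam0 hlam v hunit hangle

/-- If the initial vectors (in the unit sphere of `T_pM ≅ ℝⁿ`) of rays
representing distinct ends of a complete noncompact `M` have pairwise angle `≥ 2λ`
with `λ ∈ (0, π/2]`, then `M` has at most `2·(π/(2λ))^(n-1)` ends. -/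
theorem stmt_12 (n : ℕ) (hn : 2 ≤ n) (lam : ℝ) (hlam0 : 0 < lam) (hlam : lam ≤ π / 2)
    (M : Type*) [MetricSpace M] [ProperSpace M] (hnoncpt : ¬ CompactSpace M) (p : M)
    (v : Ends M → EuclideanSpace ℝ (Fin n))
    (hunit : ∀ e, ‖v e‖ = 1)
    (hangle : ∀ e e', e ≠ e' → 2 * lam ≤ angle (v e) (v e')) :
    Finite (Ends M) ∧ (Nat.card (Ends M) : ℝ) ≤ 2 * (π / (2 * lam)) ^ (n - 1) :=
  stmt_12_general n lam hlam0 hlam M v hunit hangle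
end

section
/- Let a, b : [0,∞) → ℝ be continuous with a ≤ b ≤ 0, and let m_a, m_b be the solutions of x'' + a·x = 0 and x'' + b·x = 0 respectively, both with x(0)=0, x'(0)=1. Then m_a(t) ≥ m_b(t) ≥ t for all t ≥ 0. -/
/-!
Both inequalities are instances of one comparison: `t` solves the Jacobi equation with
coefficient `0`. If `a ≤ b`, `a ≤ 0` and `m_b ≥ 0`, then for `0 < c < 1` the function
`w = m_a - c m_b` satisfies `w(0) = 0`, `w'(0) = 1 - c > 0` and `w'' = -a w + c (b - a) m_b`,
so `w'' ≥ 0` wherever `w ≥ 0`. A function with these properties stays positive: at a first zero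
`t₀ > 0` it would be convex on `[0, t₀]`, forcing `0 < w'(0) ≤ w(t₀) / t₀ ≤ 0`. Letting `c → 1`
gives `m_b ≤ m_a`.
-/

open Set Filter Topology

lemma eventually_pos_of_hasDerivWithinAt_Ici {f : ℝ → ℝ} {f' x : ℝ}
    (hf : HasDerivWithinAt f f' (Ici x) x) (hfx : f x = 0) (hf' : 0 < f') :
    ∀ᶠ t in 𝓝[>] x, 0 < f t := by
  have hslope := (hasDerivWithinAt_iff_tendsto_slope' self_notMem_Ioi).mp hf.Ioi_of_Ici
  filter_upwards [hslope.eventually (eventually_gt_nhds hf'), self_mem_nhdsWithin]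
    with t ht (hxt : x < t)
  rw [slope_def_field, hfx, sub_zero] at ht
  exact (div_pos_iff_of_pos_right (sub_pos.2 hxt)).1 ht

lemma le_slope_of_hasDerivWithinAt2_nonneg {f f' f'' : ℝ → ℝ} {x y : ℝ} (hxy : x < y)
    (hf : ∀ t ∈ Icc x y, HasDerivWithinAt f (f' t) (Icc x y) t)
    (hf' : ∀ t ∈ Ioo x y, HasDerivWithinAt f' (f'' t) (Ioo x y) t)
    (hf''₀ : ∀ t ∈ Ioo x y, 0 ≤ f'' t) :
    f' x ≤ slope f x y := by
  have hconvex : ConvexOn ℝ (Icc x y) f := by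
    refine convexOn_of_hasDerivWithinAt2_nonneg (f' := f') (f'' := f'') (convex_Icc x y)
      (fun t ht => (hf t ht).continuousWithinAt) ?_ ?_ ?_ <;> rw [interior_Icc]
    · exact fun t ht => (hf t (Ioo_subset_Icc_self ht)).mono Ioo_subset_Icc_self
    · exact hf'
    · exact hf''₀
  exact hconvex.le_slope_of_hasDerivWithinAt (left_mem_Icc.2 hxy.le) (right_mem_Icc.2 hxy.le)
    hxy (hf x (left_mem_Icc.2 hxy.le))

theorem pos_of_secondDeriv_nonneg_where_nonneg {w w' w'' : ℝ → ℝ}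
    (hw : ∀ t ∈ Ici (0:ℝ), HasDerivWithinAt w (w' t) (Ici 0) t)
    (hw' : ∀ t ∈ Ici (0:ℝ), HasDerivWithinAt w' (w'' t) (Ici 0) t)
    (h0 : w 0 = 0) (h0' : 0 < w' 0) (hw''₀ : ∀ t ∈ Ici (0:ℝ), 0 ≤ w t → 0 ≤ w'' t) :
    ∀ t ∈ Ioi (0:ℝ), 0 < w t := by
  intro T hT
  by_contra! hwT
  obtain ⟨δ, hδ, hpos⟩ := (mem_nhdsGT_iff_exists_Ioo_subset' hT).1
    (eventually_pos_of_hasDerivWithinAt_Ici (hw 0 self_mem_Ici) h0 h0')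
  set s := min (δ / 2) T
  have hs : 0 < s := lt_min (half_pos hδ) hT
  have hsδ : s < δ := (min_le_left _ _).trans_lt (half_lt_self hδ)
  set Z := Icc s T ∩ {t | w t ≤ 0}
  have hZ : IsClosed Z :=
    ContinuousOn.preimage_isClosed_of_isClosed
      (fun t ht => (hw t (hs.le.trans ht.1)).continuousWithinAt.mono (fun u hu => hs.le.trans hu.1))
      isClosed_Icc isClosed_Iic
  have hZbdd : BddBelow Z := ⟨s, fun t ht => ht.1.1⟩
  have hTZ : T ∈ Z := ⟨⟨min_le_right _ _, le_rfl⟩, hwT⟩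
  obtain ⟨⟨hst₀, -⟩, hwt₀⟩ : sInf Z ∈ Z := hZ.csInf_mem ⟨T, hTZ⟩ hZbdd
  set t₀ := sInf Z
  have ht₀ : 0 < t₀ := hs.trans_le hst₀
  have hpos_before : ∀ t ∈ Ioo 0 t₀, 0 < w t := by
    intro t ht
    by_contra! hwt
    rcases lt_or_ge t s with hts | hst
    · exact (hpos ⟨ht.1, hts.trans hsδ⟩).not_ge hwt
    · exact ht.2.not_ge (csInf_le hZbdd ⟨⟨hst, ht.2.le.trans (csInf_le hZbdd hTZ)⟩, hwt⟩)
  have hslope : w' 0 ≤ slope w 0 t₀ :=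
    le_slope_of_hasDerivWithinAt2_nonneg ht₀
      (fun t ht => (hw t ht.1).mono Icc_subset_Ici_self)
      (fun t ht => (hw' t ht.1.le).mono (Ioo_subset_Icc_self.trans Icc_subset_Ici_self))
      (fun t ht => hw''₀ t ht.1.le (hpos_before t ht).le)
  rw [slope_def_field, h0, sub_zero, sub_zero] at hslope
  exact h0'.not_ge (hslope.trans (div_nonpos_of_nonpos_of_nonneg hwt₀ ht₀.le))

theorem sturm_comparison {a b ma ma' ma'' mb mb' mb'' : ℝ → ℝ}
    (hab : ∀ t ∈ Ici (0:ℝ), a t ≤ b t) (ha0 : ∀ t ∈ Ici (0:ℝ), a t ≤ 0)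
    (hma : ∀ t ∈ Ici (0:ℝ), HasDerivWithinAt ma (ma' t) (Ici 0) t)
    (hma' : ∀ t ∈ Ici (0:ℝ), HasDerivWithinAt ma' (ma'' t) (Ici 0) t)
    (hodea : ∀ t ∈ Ici (0:ℝ), ma'' t + a t * ma t = 0)
    (hma0 : ma 0 = 0) (hma'0 : ma' 0 = 1)
    (hmb : ∀ t ∈ Ici (0:ℝ), HasDerivWithinAt mb (mb' t) (Ici 0) t)
    (hmb' : ∀ t ∈ Ici (0:ℝ), HasDerivWithinAt mb' (mb'' t) (Ici 0) t)
    (hodeb : ∀ t ∈ Ici (0:ℝ), mb'' t + b t * mb t = 0)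
    (hmb0 : mb 0 = 0) (hmb'0 : mb' 0 = 1) (hmb_nonneg : ∀ t ∈ Ici (0:ℝ), 0 ≤ mb t) :
    ∀ t ∈ Ici (0:ℝ), mb t ≤ ma t := by
  have hscaled : ∀ c ∈ Ioo (0:ℝ) 1, ∀ t ∈ Ici (0:ℝ), c * mb t ≤ ma t := by
    intro c hc
    have hpos := pos_of_secondDeriv_nonneg_where_nonneg (w := fun t => ma t - c * mb t)
      (fun t ht => (hma t ht).sub ((hmb t ht).const_mul c))
      (fun t ht => (hma' t ht).sub ((hmb' t ht).const_mul c))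
      (by simp [hma0, hmb0]) (by simp [hma'0, hmb'0, hc.2]) fun t ht hwt => by
        have hw'' : ma'' t - c * mb'' t = -a t * (ma t - c * mb t) + c * (b t - a t) * mb t := by
          linear_combination hodea t ht - c * hodeb t ht
        rw [hw'']
        exact add_nonneg (mul_nonneg (neg_nonneg.2 (ha0 t ht)) hwt)
          (mul_nonneg (mul_nonneg hc.1.le (sub_nonneg.2 (hab t ht))) (hmb_nonneg t ht))
    intro t ht
    rcases (mem_Ici.1 ht).eq_or_lt with rfl | ht
    · simp [hma0, hmb0]
    · exact (sub_pos.1 (hpos t ht)).le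
  intro t ht
  have hlim : Tendsto (fun c : ℝ => c * mb t) (𝓝[<] 1) (𝓝 (mb t)) := by
    simpa using ((continuous_mul_const (mb t)).tendsto 1).mono_left nhdsWithin_le_nhds
  exact le_of_tendsto hlim <|
    eventually_of_mem (Ioo_mem_nhdsLT one_pos) fun c hc => hscaled c hc t ht

theorem stmt_15_general (a b ma ma' ma'' mb mb' mb'' : ℝ → ℝ)
    (hab : ∀ t ∈ Ici (0:ℝ), a t ≤ b t) (hb0 : ∀ t ∈ Ici (0:ℝ), b t ≤ 0)
    (hma : ∀ t ∈ Ici (0:ℝ), HasDerivWithinAt ma (ma' t) (Ici 0) t)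
    (hma' : ∀ t ∈ Ici (0:ℝ), HasDerivWithinAt ma' (ma'' t) (Ici 0) t)
    (hodea : ∀ t ∈ Ici (0:ℝ), ma'' t + a t * ma t = 0)
    (hma0 : ma 0 = 0) (hma'0 : ma' 0 = 1)
    (hmb : ∀ t ∈ Ici (0:ℝ), HasDerivWithinAt mb (mb' t) (Ici 0) t)
    (hmb' : ∀ t ∈ Ici (0:ℝ), HasDerivWithinAt mb' (mb'' t) (Ici 0) t)
    (hodeb : ∀ t ∈ Ici (0:ℝ), mb'' t + b t * mb t = 0)
    (hmb0 : mb 0 = 0) (hmb'0 : mb' 0 = 1) :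
    ∀ t ∈ Ici (0:ℝ), t ≤ mb t ∧ mb t ≤ ma t := by
  have hmb_ge : ∀ t ∈ Ici (0:ℝ), t ≤ mb t :=
    sturm_comparison (b := 0) (mb := id) (mb' := 1) (mb'' := 0) hb0 hb0 hmb hmb' hodeb hmb0 hmb'0
      (fun t _ => hasDerivWithinAt_id t _) (fun t _ => hasDerivWithinAt_const t _ _)
      (fun _ _ => by simp) rfl rfl fun _ ht => ht
  have hma_ge : ∀ t ∈ Ici (0:ℝ), mb t ≤ ma t :=
    sturm_comparison hab (fun t ht => (hab t ht).trans (hb0 t ht)) hma hma' hodea hma0 hma'0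
      hmb hmb' hodeb hmb0 hmb'0 fun t ht => (mem_Ici.1 ht).trans (hmb_ge t ht)
  exact fun t ht => ⟨hmb_ge t ht, hma_ge t ht⟩

/-- Sturm-type comparison: if `a ≤ b ≤ 0` are continuous and `m_a`, `m_b`
solve `x'' + a x = 0`, `x'' + b x = 0` with `x 0 = 0`, `x' 0 = 1`, then
`m_a t ≥ m_b t ≥ t` for all `t ≥ 0`. -/
theorem stmt_15 (a b ma ma' ma'' mb mb' mb'' : ℝ → ℝ)
    (hacont : ContinuousOn a (Ici 0)) (hbcont : ContinuousOn b (Ici 0))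
    (hab : ∀ t ∈ Ici (0:ℝ), a t ≤ b t) (hb0 : ∀ t ∈ Ici (0:ℝ), b t ≤ 0)
    (hma : ∀ t ∈ Ici (0:ℝ), HasDerivWithinAt ma (ma' t) (Ici 0) t)
    (hma' : ∀ t ∈ Ici (0:ℝ), HasDerivWithinAt ma' (ma'' t) (Ici 0) t)
    (hma''cont : ContinuousOn ma'' (Ici 0))
    (hodea : ∀ t ∈ Ici (0:ℝ), ma'' t + a t * ma t = 0)
    (hma0 : ma 0 = 0) (hma'0 : ma' 0 = 1)
    (hmb : ∀ t ∈ Ici (0:ℝ), HasDerivWithinAt mb (mb' t) (Ici 0) t)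
    (hmb' : ∀ t ∈ Ici (0:ℝ), HasDerivWithinAt mb' (mb'' t) (Ici 0) t)
    (hmb''cont : ContinuousOn mb'' (Ici 0))
    (hodeb : ∀ t ∈ Ici (0:ℝ), mb'' t + b t * mb t = 0)
    (hmb0 : mb 0 = 0) (hmb'0 : mb' 0 = 1) :
    ∀ t ∈ Ici (0:ℝ), t ≤ mb t ∧ mb t ≤ ma t :=
  stmt_15_general a b ma ma' ma'' mb mb' mb'' hab hb0 hma hma' hodea hma0 hma'0 hmb hmb' hodeb hmb0
    hmb'0
end
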